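/- Let N(t) = N₁(ξ·μ(t)) where N₁ is a unit-rate Poisson process independent of ξ ~ Min-U-Exp(a,λ) and μ is nonnegative strictly increasing continuous with μ(0)=0. Then for |z| < 1 and t ≥ 0, the probability generating function satisfies E[z^{N(t)}] = λ/(λ + μ(t)(1-z)) + (μ(t)(1-z)/(a(λ + μ(t)(1-z))²))·(1 - e^{-a(λ + μ(t)(1-z))}). -/

import Mathlib

/-!
Conditionally on `ξ = x`, `N(t)` is Poisson with mean `x μ(t)`, whose generating function is
`exp(-x μ(t) (1 - z))`. For `|z| < 1` the Poisson weights are at most `1`, so the series over `n`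
is dominated by a geometric series and may be exchanged with the integral over `ξ`. What is left
is the Laplace transform of the Min-U-Exp density at `μ(t) (1 - z)`, an integral of an
exponential times an affine function, computed by an explicit antiderivative.
-/

open MeasureTheory ProbabilityTheory Real Set

lemma hasSum_poisson_pgf (r z : ℝ) :
    HasSum (fun n : ℕ => z ^ n * (r ^ n * exp (-r) / n.factorial)) (exp (-(r * (1 - z)))) := by
  have h := (NormedSpace.expSeries_div_hasSum_exp (z * r)).mul_right (exp (-r))
  rw [← exp_eq_exp_ℝ, ← exp_add, show z * r + -r = -(r * (1 - z)) by ring] at h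
  have hterm : (fun n : ℕ => z ^ n * (r ^ n * exp (-r) / n.factorial))
      = fun n => (z * r) ^ n / n.factorial * exp (-r) := funext fun n => by rw [mul_pow]; ring
  rw [hterm]
  exact h

lemma pow_mul_exp_neg_div_factorial_le_one {r : ℝ} (hr : 0 ≤ r) (n : ℕ) :
    r ^ n * exp (-r) / n.factorial ≤ 1 :=
  calc r ^ n * exp (-r) / n.factorial = r ^ n / n.factorial * exp (-r) := by ring
    _ ≤ exp r * exp (-r) := by gcongr; exact pow_div_factorial_le_exp r hr n
    _ = 1 := by rw [← exp_add, add_neg_cancel, exp_zero]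

theorem tsum_pow_mul_integral_mixedPoisson {α : Type*} [MeasurableSpace α] {μ : Measure α}
    {ρ f : α → ℝ} (hρ : AEStronglyMeasurable ρ μ) (hρ0 : ∀ᵐ x ∂μ, 0 ≤ ρ x)
    (hf : Integrable f μ) {z : ℝ} (hz : |z| < 1) :
    ∑' n : ℕ, z ^ n * ∫ x, ρ x ^ n * exp (-ρ x) / n.factorial * f x ∂μ
      = ∫ x, exp (-(ρ x * (1 - z))) * f x ∂μ := by
  set w : ℕ → α → ℝ := fun n x => z ^ n * (ρ x ^ n * exp (-ρ x) / n.factorial)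
  have hw_le : ∀ n, ∀ᵐ x ∂μ, ‖w n x‖ ≤ |z| ^ n := fun n => by
    filter_upwards [hρ0] with x hx
    have hw0 : 0 ≤ ρ x ^ n * exp (-ρ x) / n.factorial := by positivity
    simp only [w, norm_mul, norm_pow, Real.norm_eq_abs, abs_of_nonneg hw0]
    exact mul_le_of_le_one_right (by positivity) (pow_mul_exp_neg_div_factorial_le_one hx n)
  have hw_int : ∀ n, Integrable (fun x => w n x * f x) μ := fun n =>
    hf.bdd_mul ((by fun_prop : Continuous fun r : ℝ => z ^ n * (r ^ n * exp (-r) / n.factorial))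
      |>.comp_aestronglyMeasurable hρ) (hw_le n)
  have hw_norm : Summable fun n => ∫ x, ‖w n x * f x‖ ∂μ := by
    refine Summable.of_nonneg_of_le (fun n => integral_nonneg fun x => norm_nonneg _) (fun n => ?_)
      ((summable_geometric_of_lt_one (abs_nonneg z) hz).mul_right (∫ x, ‖f x‖ ∂μ))
    rw [← integral_const_mul]
    refine integral_mono_ae (hw_int n).norm (hf.norm.const_mul _) ?_
    filter_upwards [hw_le n] with x hx
    rw [norm_mul]
    exact mul_le_mul_of_nonneg_right hx (norm_nonneg _)
  calc ∑' n : ℕ, z ^ n * ∫ x, ρ x ^ n * exp (-ρ x) / n.factorial * f x ∂μ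
      = ∑' n : ℕ, ∫ x, w n x * f x ∂μ := by
        congr 1 with n
        rw [← integral_const_mul]
        simp only [w, mul_assoc]
    _ = ∫ x, ∑' n : ℕ, w n x * f x ∂μ := integral_tsum_of_summable_integral_norm hw_int hw_norm
    _ = ∫ x, exp (-(ρ x * (1 - z))) * f x ∂μ :=
        integral_congr_ae (ae_of_all _ fun x => ((hasSum_poisson_pgf (ρ x) z).mul_right _).tsum_eq)

lemma integral_exp_neg_mul_mul_affine {c : ℝ} (hc : c ≠ 0) (p q a : ℝ) :
    ∫ x in (0 : ℝ)..a, exp (-(c * x)) * (p + q * x)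
      = (p + q / c) / c - exp (-(c * a)) * (p + q / c + q * a) / c := by
  set F : ℝ → ℝ := fun x => -exp (-(c * x)) * (p + q / c + q * x) / c
  have hF : ∀ x, HasDerivAt F (exp (-(c * x)) * (p + q * x)) x := fun x => by
    have hexp : HasDerivAt (fun x => exp (-(c * x))) (exp (-(c * x)) * -c) x := by
      simpa using ((hasDerivAt_id x).const_mul (-c)).exp
    have hlin : HasDerivAt (fun x => p + q / c + q * x) q x := by
      simpa using ((hasDerivAt_id x).const_mul q).const_add (p + q / c)
    refine (hexp.neg.mul hlin |>.div_const c).congr_deriv ?_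
    simp only [Pi.neg_apply]
    field_simp
    ring
  rw [intervalIntegral.integral_eq_sub_of_hasDerivAt (fun x _ => hF x)
    ((by fun_prop : Continuous fun x => exp (-(c * x)) * (p + q * x)).intervalIntegrable 0 a)]
  simp only [F, mul_zero, neg_zero, exp_zero, add_zero]
  ring

noncomputable def minUExpDensity (a lam x : ℝ) : ℝ :=
  exp (-lam * x) / a * (lam * a + 1 - lam * x)

lemma continuous_minUExpDensity (a lam : ℝ) : Continuous (minUExpDensity a lam) := by
  unfold minUExpDensity
  fun_prop

lemma integral_exp_neg_mul_minUExpDensity {a lam s : ℝ} (ha : 0 < a) (hc : lam + s ≠ 0) :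
    ∫ x in Ioo 0 a, exp (-(x * s)) * minUExpDensity a lam x
      = lam / (lam + s) + s / (a * (lam + s) ^ 2) * (1 - exp (-a * (lam + s))) := by
  have hintegrand : ∀ x, exp (-(x * s)) * minUExpDensity a lam x
      = exp (-((lam + s) * x)) * ((lam * a + 1) / a + -lam / a * x) := fun x => by
    rw [minUExpDensity, show -((lam + s) * x) = -(x * s) + -lam * x by ring, exp_add]
    field_simp
    ring
  simp_rw [hintegrand]
  rw [← integral_Ioc_eq_integral_Ioo, ← intervalIntegral.integral_of_le ha.le,
    integral_exp_neg_mul_mul_affine hc, show -a * (lam + s) = -((lam + s) * a) by ring]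
  field_simp
  ring

theorem mixedPoisson_pgf_general {Ω : Type*} [MeasureSpace Ω]
    (a lam : ℝ) (ha : 0 < a) (hlam : 0 < lam)
    (mu : ℝ → ℝ) (hμnonneg : ∀ t : ℝ, 0 ≤ t → 0 ≤ mu t)
    (N : ℝ → Ω → ℕ)
    (hN : ∀ t : ℝ, 0 ≤ t → ∀ n : ℕ,
      (ℙ {ω | N t ω = n}).toReal
        = ∫ x in Set.Ioo (0 : ℝ) a,
            (x * mu t) ^ n * Real.exp (-(x * mu t)) / n.factorial *
              (Real.exp (-lam * x) / a * (lam * a + 1 - lam * x))) :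
    ∀ t : ℝ, 0 ≤ t → ∀ z : ℝ, |z| < 1 →
      (∑' n : ℕ, z ^ n * (ℙ {ω | N t ω = n}).toReal)
        = lam / (lam + mu t * (1 - z))
            + mu t * (1 - z) / (a * (lam + mu t * (1 - z)) ^ 2) *
                (1 - Real.exp (-a * (lam + mu t * (1 - z)))) := by
  intro t ht z hz
  have hμt := hμnonneg t ht
  have hc : lam + mu t * (1 - z) ≠ 0 := by
    have : 0 < 1 - z := by linarith [le_abs_self z]
    positivity
  simp_rw [hN t ht]
  refine (tsum_pow_mul_integral_mixedPoisson (ρ := fun x => x * mu t) (f := minUExpDensity a lam)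
    (by fun_prop) (ae_restrict_of_forall_mem measurableSet_Ioo fun x hx =>
      mul_nonneg hx.1.le hμt) ((continuous_minUExpDensity a lam).integrableOn_Icc.mono_set
      Ioo_subset_Icc_self) hz).trans ?_
  simp only [mul_assoc _ (mu t) (1 - z)]
  exact integral_exp_neg_mul_minUExpDensity ha hc

theorem mixedPoisson_pgf {Ω : Type*} [MeasureSpace Ω] [IsProbabilityMeasure (ℙ : Measure Ω)]
    (a lam : ℝ) (ha : 0 < a) (hlam : 0 < lam)
    (mu : ℝ → ℝ) (hμ0 : mu 0 = 0) (hμmono : StrictMonoOn mu (Set.Ici 0))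
    (hμcont : ContinuousOn mu (Set.Ici 0)) (hμnonneg : ∀ t : ℝ, 0 ≤ t → 0 ≤ mu t)
    (N : ℝ → Ω → ℕ) (hNm : ∀ t, Measurable (N t))
    (hN : ∀ t : ℝ, 0 ≤ t → ∀ n : ℕ,
      (ℙ {ω | N t ω = n}).toReal
        = ∫ x in Set.Ioo (0 : ℝ) a,
            (x * mu t) ^ n * Real.exp (-(x * mu t)) / n.factorial *
              (Real.exp (-lam * x) / a * (lam * a + 1 - lam * x))) :
    ∀ t : ℝ, 0 ≤ t → ∀ z : ℝ, |z| < 1 →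
      (∑' n : ℕ, z ^ n * (ℙ {ω | N t ω = n}).toReal)
        = lam / (lam + mu t * (1 - z))
            + mu t * (1 - z) / (a * (lam + mu t * (1 - z)) ^ 2) *
                (1 - Real.exp (-a * (lam + mu t * (1 - z)))) :=
  mixedPoisson_pgf_general a lam ha hlam mu hμnonneg N hN
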